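/- Let E be a Banach lattice, S a commutative semigroup, and (T_t)_{t∈S} a family of positive bounded linear operators on E with T_{t+s} = T_t ∘ T_s and sup_{t∈S} ‖T_t‖ < ∞. Assume the family is irreducible: the only closed ideals I of E with T_t I ⊆ I for all t ∈ S are {0} and E. Then every super fixed point is a fixed point (if x ≥ 0 and T_t x ≥ x for all t ∈ S, then T_t x = x for all t ∈ S), and the fixed space is a sublattice: if T_t x = x for all t ∈ S, then T_t |x| = |x| for all t ∈ S. -/

import Mathlib

/-!
Let `x ≥ 0` satisfy `x ≤ T_s x` for all `s`, fix `t` and put `A = T_t`. The vectors `v` with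
`|v| ≤ w` for some `w` whose orbit sums `∑_{k<n} A^k w` stay bounded form an ideal; its closure
`I` is a closed ideal invariant under every `T_s`, because `T_s` is positive and commutes with
`A`. Telescoping puts `A x - x` in `I`, so `I = {0}` gives `A x = x`. If `I = E`, approximate
`x` by such a `v`: from `x ≤ A^k x` we get `n • x ≤ ∑_{k<n} A^k |x - v| + ∑_{k<n} A^k w`, hence
`n ‖x‖ ≤ n M ‖x - v‖ + C` for all `n`, so `‖x‖ ≤ M ‖x - v‖` and `x = 0`.

A fixed point `x` gives the super fixed point `|x|`, as `|x| = |T_t x| ≤ T_t |x|`.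
-/

open Finset Filter Topology

lemma le_of_forall_nat_mul_le_mul_add {a b C : ℝ} (h : ∀ n : ℕ, n * a ≤ n * b + C) : a ≤ b := by
  by_contra! hba
  obtain ⟨n, hn⟩ := exists_nat_gt (C / (a - b))
  rw [div_lt_iff₀ (sub_pos.mpr hba)] at hn
  nlinarith [h n]

section LatticeGroup

variable {E : Type*} [Lattice E] [AddCommGroup E]

lemma abs_map_le_map_abs {F G : Type*} [Lattice F] [AddCommGroup F] [FunLike G E F]
    [AddMonoidHomClass G E F] {f : G} (hf : Monotone f) (v : E) : |f v| ≤ f |v| :=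
  abs_le'.mpr ⟨hf (le_abs_self v), map_neg f v ▸ hf (neg_le_abs v)⟩

lemma abs_smul_le [Module ℝ E] [PosSMulMono ℝ E] (a : ℝ) (v : E) : |a • v| ≤ |a| • |v| := by
  have key : ∀ b : ℝ, 0 ≤ b → ∀ u : E, |b • u| ≤ b • |u| := fun b hb u =>
    abs_le'.mpr ⟨smul_le_smul_of_nonneg_left (le_abs_self u) hb,
      smul_neg b u ▸ smul_le_smul_of_nonneg_left (neg_le_abs u) hb⟩
  rcases le_total 0 a with ha | ha
  · simpa only [abs_of_nonneg ha] using key a ha v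
  · simpa only [neg_smul_neg, abs_neg, abs_of_nonpos ha] using key (-a) (neg_nonneg.mpr ha) (-v)

variable [IsOrderedAddMonoid E]

lemma abs_sup_neg_inf_le {w : E} (g : E) (hw : 0 ≤ w) : |(g ⊔ -w) ⊓ w| ≤ w := by
  rw [abs_le', neg_inf, neg_sup, neg_neg]
  exact ⟨inf_le_right, sup_le inf_le_right (neg_le_self hw)⟩

lemma sup_neg_inf_eq_self {g w : E} (h : |g| ≤ w) : (g ⊔ -w) ⊓ w = g := by
  obtain ⟨h₁, h₂⟩ := abs_le'.mp h
  rw [sup_eq_left.mpr (neg_le.mpr h₂), inf_eq_left.mpr h₁]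

lemma dyadic_smul_nonneg [Module ℝ E] {x : E} (hx : 0 ≤ x) (m n : ℕ) :
    0 ≤ ((m : ℝ) / 2 ^ n) • x := by
  induction n generalizing m with
  | zero => simpa [Nat.cast_smul_eq_nsmul] using nsmul_nonneg hx m
  | succ n ih =>
    refine nsmul_two_semiclosed ?_
    rw [← Nat.cast_smul_eq_nsmul ℝ, smul_smul]
    convert ih m using 2
    push_cast
    ring

end LatticeGroup

section SolidNorm

variable {E : Type*} [NormedAddCommGroup E] [Lattice E] [HasSolidNorm E] [IsOrderedAddMonoid E]

lemma norm_le_norm_of_nonneg_of_le {a b : E} (ha : 0 ≤ a) (hab : a ≤ b) : ‖a‖ ≤ ‖b‖ :=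
  HasSolidNorm.solid (by rwa [abs_of_nonneg ha, abs_of_nonneg (ha.trans hab)])

open LatticeOrderedAddCommGroup in
lemma LatticeOrderedAddCommGroup.IsSolid.closure {s : Set E} (hs : IsSolid s) :
    IsSolid (closure s) := by
  intro f hf g hgf
  have : (𝓝[s] f).NeBot := mem_closure_iff_nhdsWithin_neBot.mp hf
  have habs : Continuous (fun v : E => |v|) := continuous_id.sup continuous_neg
  have hcont : Continuous (fun v => (g ⊔ -|v|) ⊓ |v|) :=
    (continuous_const.sup habs.neg).inf habs
  have hclamp : Tendsto (fun v => (g ⊔ -|v|) ⊓ |v|) (𝓝[s] f) (𝓝 g) := by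
    simpa only [sup_neg_inf_eq_self hgf] using (hcont.tendsto f).mono_left nhdsWithin_le_nhds
  exact mem_closure_of_tendsto hclamp (eventually_nhdsWithin_of_forall fun v hv =>
    hs hv (abs_sup_neg_inf_le g (abs_nonneg v)))

variable [NormedSpace ℝ E]

-- The order axioms do not include positive homogeneity: it holds for dyadic scalars by
-- `nsmul_two_semiclosed`, and then for all scalars since the positive cone is closed.
lemma smul_nonneg_of_hasSolidNorm {a : ℝ} {x : E} (ha : 0 ≤ a) (hx : 0 ≤ x) : 0 ≤ a • x := by
  have hlim : Tendsto (fun n : ℕ => (⌊a * 2 ^ n⌋₊ : ℝ) / 2 ^ n) atTop (𝓝 a) :=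
    (tendsto_nat_floor_mul_div_atTop ha).comp (tendsto_pow_atTop_atTop_of_one_lt one_lt_two)
  exact isClosed_nonneg.mem_of_tendsto (hlim.smul_const x)
    (Eventually.of_forall fun n => dyadic_smul_nonneg hx _ n)

instance HasSolidNorm.toPosSMulMono : PosSMulMono ℝ E :=
  PosSMulMono.of_smul_nonneg fun _ ha _ hx => smul_nonneg_of_hasSolidNorm ha hx

end SolidNorm

namespace ContinuousLinearMap

section OrbitSums

variable {𝕜 E : Type*} [NontriviallyNormedField 𝕜] [NormedAddCommGroup E] [NormedSpace 𝕜 E]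

variable (A : E →L[𝕜] E) in
def HasBoundedOrbitSums (w : E) : Prop :=
  ∃ C, ∀ n, ‖∑ k ∈ range n, (A ^ k) w‖ ≤ C

variable {A : E →L[𝕜] E}

lemma HasBoundedOrbitSums.add {w₁ w₂ : E} (h₁ : A.HasBoundedOrbitSums w₁)
    (h₂ : A.HasBoundedOrbitSums w₂) : A.HasBoundedOrbitSums (w₁ + w₂) := by
  obtain ⟨C₁, hC₁⟩ := h₁
  obtain ⟨C₂, hC₂⟩ := h₂
  refine ⟨C₁ + C₂, fun n => ?_⟩
  simp only [map_add, sum_add_distrib]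
  exact (norm_add_le _ _).trans (add_le_add (hC₁ n) (hC₂ n))

lemma HasBoundedOrbitSums.smul {w : E} (h : A.HasBoundedOrbitSums w) (a : 𝕜) :
    A.HasBoundedOrbitSums (a • w) := by
  obtain ⟨C, hC⟩ := h
  refine ⟨‖a‖ * C, fun n => ?_⟩
  simp only [map_smul, ← smul_sum, norm_smul]
  exact mul_le_mul_of_nonneg_left (hC n) (norm_nonneg a)

lemma HasBoundedOrbitSums.map {B : E →L[𝕜] E} (hBA : Commute B A) {w : E}
    (h : A.HasBoundedOrbitSums w) : A.HasBoundedOrbitSums (B w) := by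
  obtain ⟨C, hC⟩ := h
  refine ⟨‖B‖ * C, fun n => ?_⟩
  have hcomm : ∀ k, (A ^ k) (B w) = B ((A ^ k) w) := fun k =>
    congrArg (· w) (hBA.pow_right k).eq.symm
  simp only [hcomm, ← map_sum]
  exact (B.le_opNorm _).trans (mul_le_mul_of_nonneg_left (hC n) (norm_nonneg B))

lemma hasBoundedOrbitSums_apply_sub_self {M : ℝ} (hM : ∀ k, ‖A ^ k‖ ≤ M) (x : E) :
    A.HasBoundedOrbitSums (A x - x) := by
  refine ⟨M * ‖x‖ + ‖x‖, fun n => ?_⟩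
  have htel : ∑ k ∈ range n, (A ^ k) (A x - x) = (A ^ n) x - x := by
    have hterm : ∀ k, (A ^ k) (A x - x) = (A ^ (k + 1)) x - (A ^ k) x := fun k => by
      rw [map_sub, pow_succ, mul_apply_eq_comp]
    simp only [hterm, sum_range_sub (fun k => (A ^ k) x), pow_zero, one_apply_eq_self]
  rw [htel]
  exact (norm_sub_le _ _).trans (add_le_add_left ((A ^ n).le_of_opNorm_le (hM n) x) _)

variable [Preorder E]

lemma monotone_pow (hA : Monotone A) (k : ℕ) : Monotone ⇑(A ^ k) := by
  rw [FunLike.coe_pow_eq_iterate]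
  exact hA.iterate k

lemma le_pow_apply (hA : Monotone A) {x : E} (hxA : x ≤ A x) (k : ℕ) : x ≤ (A ^ k) x := by
  rw [FunLike.coe_pow_eq_iterate]
  exact hA.monotone_iterate_of_le_map hxA (Nat.zero_le k)

end OrbitSums

variable {E : Type*} [NormedAddCommGroup E] [Lattice E] [IsOrderedAddMonoid E]
  [NormedSpace ℝ E] [PosSMulMono ℝ E] {A : E →L[ℝ] E}

variable (A) in
def boundedOrbitIdeal : Submodule ℝ E where
  carrier := {v | ∃ w, A.HasBoundedOrbitSums w ∧ |v| ≤ w}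
  zero_mem' := ⟨0, ⟨0, fun n => by simp⟩, abs_zero.le⟩
  add_mem' := fun ⟨w₁, hw₁, hv₁⟩ ⟨w₂, hw₂, hv₂⟩ =>
    ⟨w₁ + w₂, hw₁.add hw₂, (abs_add_le _ _).trans (add_le_add hv₁ hv₂)⟩
  smul_mem' := fun a _ ⟨w, hw, hv⟩ =>
    ⟨|a| • w, hw.smul |a|, (abs_smul_le a _).trans (smul_le_smul_of_nonneg_left hv (abs_nonneg a))⟩

lemma isSolid_boundedOrbitIdeal :
    LatticeOrderedAddCommGroup.IsSolid (A.boundedOrbitIdeal : Set E) :=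
  fun _ ⟨w, hw, hf⟩ _ hg => ⟨w, hw, hg.trans hf⟩

lemma map_mem_boundedOrbitIdeal {B : E →L[ℝ] E} (hB : Monotone B) (hBA : Commute B A) {v : E}
    (hv : v ∈ A.boundedOrbitIdeal) : B v ∈ A.boundedOrbitIdeal := by
  obtain ⟨w, hw, hvw⟩ := hv
  exact ⟨B w, hw.map hBA, (abs_map_le_map_abs hB v).trans (hB hvw)⟩

lemma apply_sub_self_mem_boundedOrbitIdeal {M : ℝ} (hM : ∀ k, ‖A ^ k‖ ≤ M) {x : E}
    (hxA : x ≤ A x) : A x - x ∈ A.boundedOrbitIdeal :=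
  ⟨A x - x, hasBoundedOrbitSums_apply_sub_self hM x, (abs_of_nonneg (sub_nonneg.mpr hxA)).le⟩

variable [HasSolidNorm E]

lemma norm_le_mul_norm_sub_of_mem_boundedOrbitIdeal (hA : Monotone A) {M : ℝ}
    (hM : ∀ k, ‖A ^ k‖ ≤ M) {x v : E} (hx : 0 ≤ x) (hxA : x ≤ A x)
    (hv : v ∈ A.boundedOrbitIdeal) : ‖x‖ ≤ M * ‖x - v‖ := by
  obtain ⟨w, ⟨C, hC⟩, hvw⟩ := hv
  have hxw : x ≤ |x - v| + w := calc
    x = |x| := (abs_of_nonneg hx).symm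
    _ ≤ |x - v| + |v| := by simpa using abs_add_le (x - v) v
    _ ≤ |x - v| + w := add_le_add le_rfl hvw
  refine le_of_forall_nat_mul_le_mul_add (C := C) fun n => ?_
  have hsum : n • x ≤ ∑ k ∈ range n, (A ^ k) |x - v| + ∑ k ∈ range n, (A ^ k) w := calc
    n • x = ∑ _k ∈ range n, x := by rw [sum_const, card_range]
    _ ≤ ∑ k ∈ range n, (A ^ k) x := sum_le_sum fun k _ => le_pow_apply hA hxA k
    _ ≤ ∑ k ∈ range n, ((A ^ k) |x - v| + (A ^ k) w) :=
      sum_le_sum fun k _ => map_add (A ^ k) _ _ ▸ monotone_pow hA k hxw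
    _ = _ := sum_add_distrib
  calc (n : ℝ) * ‖x‖ = ‖n • x‖ := by
        rw [← Nat.cast_smul_eq_nsmul ℝ, norm_smul, Real.norm_natCast]
    _ ≤ ‖∑ k ∈ range n, (A ^ k) |x - v| + ∑ k ∈ range n, (A ^ k) w‖ :=
      norm_le_norm_of_nonneg_of_le (nsmul_nonneg hx n) hsum
    _ ≤ ‖∑ k ∈ range n, (A ^ k) |x - v|‖ + ‖∑ k ∈ range n, (A ^ k) w‖ := norm_add_le _ _
    _ ≤ n * (M * ‖x - v‖) + C := by
      refine add_le_add ?_ (hC n)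
      simpa [norm_abs_eq_norm] using
        norm_sum_le_of_le (range n) fun k _ => (A ^ k).le_of_opNorm_le (hM k) |x - v|

lemma eq_zero_of_mem_closure_boundedOrbitIdeal (hA : Monotone A) {M : ℝ}
    (hM : ∀ k, ‖A ^ k‖ ≤ M) {x : E} (hx : 0 ≤ x) (hxA : x ≤ A x)
    (hcl : x ∈ closure (A.boundedOrbitIdeal : Set E)) : x = 0 := by
  have hclosed : IsClosed {v : E | ‖x‖ ≤ M * ‖x - v‖} :=
    isClosed_le continuous_const (by fun_prop)
  have : ‖x‖ ≤ M * ‖x - x‖ := closure_minimal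
    (fun v hv => norm_le_mul_norm_sub_of_mem_boundedOrbitIdeal hA hM hx hxA hv) hclosed hcl
  simpa using this

end ContinuousLinearMap

section Semigroup

variable {𝕜 E S : Type*} [NontriviallyNormedField 𝕜] [NormedAddCommGroup E] [NormedSpace 𝕜 E]
  {T : S → E →L[𝕜] E}

lemma exists_pow_succ_eq_of_map_add [AddSemigroup S] (h_sg : ∀ t s, T (t + s) = (T t).comp (T s))
    (t : S) (k : ℕ) : ∃ s, T t ^ (k + 1) = T s := by
  induction k with
  | zero => exact ⟨t, pow_one _⟩
  | succ k ih =>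
    obtain ⟨s, hs⟩ := ih
    exact ⟨t + s, by rw [pow_succ', hs, h_sg]; rfl⟩

lemma norm_pow_le_of_map_add [AddSemigroup S] (h_sg : ∀ t s, T (t + s) = (T t).comp (T s))
    {M : ℝ} (hM : ∀ t, ‖T t‖ ≤ M) (t : S) (k : ℕ) : ‖T t ^ k‖ ≤ max M 1 := by
  cases k with
  | zero => exact ContinuousLinearMap.norm_id_le.trans (le_max_right M 1)
  | succ k =>
    obtain ⟨s, hs⟩ := exists_pow_succ_eq_of_map_add h_sg t k
    exact hs ▸ (hM s).trans (le_max_left M 1)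

lemma commute_of_map_add [AddCommSemigroup S] (h_sg : ∀ t s, T (t + s) = (T t).comp (T s))
    (s t : S) : Commute (T s) (T t) := by
  change (T s).comp (T t) = (T t).comp (T s)
  rw [← h_sg, ← h_sg, add_comm]

end Semigroup

open ContinuousLinearMap in
theorem apply_eq_self_of_le_apply_of_irreducible
    {E : Type*} [NormedAddCommGroup E] [Lattice E] [HasSolidNorm E] [IsOrderedAddMonoid E]
    [NormedSpace ℝ E] {S : Type*} [AddCommSemigroup S] (T : S → (E →L[ℝ] E))
    (hT : ∀ t, Monotone (T t)) (h_sg : ∀ t s : S, T (t + s) = (T t).comp (T s))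
    (h_bdd : ∃ M : ℝ, ∀ t : S, ‖T t‖ ≤ M)
    (h_irr : ∀ I : Submodule ℝ E, IsClosed (I : Set E) →
        (∀ f ∈ I, ∀ g : E, |g| ≤ |f| → g ∈ I) →
        (∀ t : S, ∀ x ∈ I, T t x ∈ I) →
        I = ⊥ ∨ I = ⊤)
    {x : E} (hx : 0 ≤ x) (hxT : ∀ t, x ≤ T t x) (t : S) : T t x = x := by
  obtain ⟨M, hM⟩ := h_bdd
  have hpow := norm_pow_le_of_map_add h_sg hM t
  have hinv : ∀ s, ∀ v ∈ (T t).boundedOrbitIdeal.topologicalClosure,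
      T s v ∈ (T t).boundedOrbitIdeal.topologicalClosure := fun s v hv =>
    map_mem_closure (T s).continuous hv fun u hu =>
      map_mem_boundedOrbitIdeal (hT s) (commute_of_map_add h_sg s t) hu
  rcases h_irr _ (Submodule.isClosed_topologicalClosure _)
      (fun f hf g hg => isSolid_boundedOrbitIdeal.closure hf hg) hinv with hI | hI
  · have hmem := Submodule.le_topologicalClosure _
      (apply_sub_self_mem_boundedOrbitIdeal hpow (hxT t))
    rwa [hI, Submodule.mem_bot, sub_eq_zero] at hmem
  · have hcl : x ∈ closure ((T t).boundedOrbitIdeal : Set E) := by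
      rw [← Submodule.topologicalClosure_coe, hI]
      exact Submodule.mem_top
    rw [eq_zero_of_mem_closure_boundedOrbitIdeal (hT t) hpow hx (hxT t) hcl, map_zero]

theorem stmt_10_general
    {E : Type*} [NormedAddCommGroup E] [Lattice E] [HasSolidNorm E] [IsOrderedAddMonoid E] [NormedSpace ℝ E]
    {S : Type*} [AddCommSemigroup S]
    (T : S → (E →L[ℝ] E))
    (h_pos : ∀ (t : S) (x : E), 0 ≤ x → 0 ≤ T t x)
    (h_sg : ∀ t s : S, T (t + s) = (T t).comp (T s))
    (h_bdd : ∃ M : ℝ, ∀ t : S, ‖T t‖ ≤ M)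
    (h_irr : ∀ I : Submodule ℝ E, IsClosed (I : Set E) →
        (∀ f ∈ I, ∀ g : E, |g| ≤ |f| → g ∈ I) →
        (∀ t : S, ∀ x ∈ I, T t x ∈ I) →
        I = ⊥ ∨ I = ⊤) :
    (∀ x : E, 0 ≤ x → (∀ t : S, x ≤ T t x) → ∀ t : S, T t x = x) ∧
    (∀ x : E, (∀ t : S, T t x = x) → ∀ t : S, T t |x| = |x|) := by
  have hT : ∀ t, Monotone (T t) := fun t => (monotone_iff_map_nonneg (T t)).mpr (h_pos t)
  refine ⟨fun x hx hxT t => apply_eq_self_of_le_apply_of_irreducible T hT h_sg h_bdd h_irr hx hxT t,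
    fun x hfix t => ?_⟩
  refine apply_eq_self_of_le_apply_of_irreducible T hT h_sg h_bdd h_irr (abs_nonneg x)
    (fun s => ?_) t
  calc |x| = |T s x| := by rw [hfix s]
    _ ≤ T s |x| := abs_map_le_map_abs (hT s) x

/-- For an irreducible bounded commutative semigroup of positive operators on a
Banach lattice, every super fixed point is a fixed point and the fixed space is a
sublattice. -/
theorem stmt_10
    {E : Type*} [NormedAddCommGroup E] [Lattice E] [HasSolidNorm E] [IsOrderedAddMonoid E] [NormedSpace ℝ E] [CompleteSpace E]
    {S : Type*} [AddCommSemigroup S]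
    (T : S → (E →L[ℝ] E))
    (h_pos : ∀ (t : S) (x : E), 0 ≤ x → 0 ≤ T t x)
    (h_sg : ∀ t s : S, T (t + s) = (T t).comp (T s))
    (h_bdd : ∃ M : ℝ, ∀ t : S, ‖T t‖ ≤ M)
    (h_irr : ∀ I : Submodule ℝ E, IsClosed (I : Set E) →
        (∀ f ∈ I, ∀ g : E, |g| ≤ |f| → g ∈ I) →
        (∀ t : S, ∀ x ∈ I, T t x ∈ I) →
        I = ⊥ ∨ I = ⊤) :
    (∀ x : E, 0 ≤ x → (∀ t : S, x ≤ T t x) → ∀ t : S, T t x = x) ∧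
    (∀ x : E, (∀ t : S, T t x = x) → ∀ t : S, T t |x| = |x|) :=
  stmt_10_general T h_pos h_sg h_bdd h_irr
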